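/- Let T* be a real-valued random variable and X a random variable with values in a measurable space E, both on a probability space (Ω, 𝓕, P), and let C be a real-valued random variable independent of the pair (T*, X). Let t ∈ ℝ, define h(u) = P(C ≥ u), and assume there is c > 0 with h(u) ≥ c for all u ≤ t. Set W = 1{T* ≤ C} · 1{T* ≤ t} / h(T*). Then for every bounded measurable function π : E → ℝ, E[ (1 − W − π(X))² ] = E[ (1{T* > t} − π(X))² ] + B(t), where B(t) = E[ 1{T* ≤ t} · (1 − h(T*)) / h(T*) ]. Moreover B(t) ≥ 0 and B(t) does not depend on π. -/

import Mathlib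

/-!
Condition on `(T*, X) = (s, x)`: by independence `C` keeps its law, so only the average over `C`
of the squared residual has to be computed. For `s ≤ t` the weight is `1 / h(s)` on the event
`{C ≥ s}` of probability `h(s)` and `0` otherwise, and with `p = π(x)`
`h (1 - 1/h - p)² + (1 - h)(1 - p)² = p² + (1 - h)/h`; for `s > t` the residual is `1 - p`.
Integrating over `(T*, X)` gives the Brier score plus `B(t)`. The bound `h ≥ c` on `(-∞, t]`
and the boundedness of `π` make every integrand bounded, which justifies Fubini.
-/

open MeasureTheory ProbabilityTheory

@[fun_prop]
theorem Measurable.ite_of_measurable_pred {α β : Type*} [MeasurableSpace α] [MeasurableSpace β]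
    {p : α → Prop} [DecidablePred p] (hp : Measurable p) {f g : α → β} (hf : Measurable f)
    (hg : Measurable g) : Measurable fun x => if p x then f x else g x :=
  hf.ite hp.setOf hg

theorem integrable_sq_of_abs_le {α : Type*} [MeasurableSpace α] {μ : Measure α}
    [IsFiniteMeasure μ] {f : α → ℝ} (hf : AEStronglyMeasurable f μ) {M : ℝ}
    (hM : ∀ x, |f x| ≤ M) : Integrable (fun x => f x ^ 2) μ :=
  .of_bound (hf.pow 2) (M ^ 2) (ae_of_all _ fun x => by
    simpa only [Real.norm_eq_abs, abs_pow] using pow_le_pow_left₀ (abs_nonneg _) (hM x) 2)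

theorem ite_mul_div_mem_Icc {h : ℝ → ℝ} {c t : ℝ} (hc : 0 < c) (hcbd : ∀ u ≤ t, c ≤ h u)
    {a : ℝ} (ha : a ∈ Set.Icc (0 : ℝ) 1) (s : ℝ) :
    (if s ≤ t then (1 : ℝ) else 0) * a / h s ∈ Set.Icc 0 (1 / c) := by
  split_ifs with hs
  · have hcs := hcbd s hs
    rw [one_mul]
    exact ⟨div_nonneg ha.1 (hc.le.trans hcs), div_le_div₀ zero_le_one ha.2 hc hcs⟩
  · simp [hc.le]

section

variable {Ω : Type*} [MeasurableSpace Ω] {P : Measure Ω} [IsProbabilityMeasure P]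

theorem integral_ite_const {p : Ω → Prop} [DecidablePred p] (hp : MeasurableSet {ω | p ω})
    (a b : ℝ) :
    ∫ ω, (if p ω then a else b) ∂P = P.real {ω | p ω} * a + (1 - P.real {ω | p ω}) * b := by
  rw [← probReal_compl_eq_one_sub hp, ← smul_eq_mul, ← smul_eq_mul, ← setIntegral_const,
    ← setIntegral_const, ← integral_piecewise hp integrableOn_const integrableOn_const]
  rfl

theorem antitone_measureReal_le (C : Ω → ℝ) : Antitone fun u => P.real {ω | u ≤ C ω} :=
  fun _ _ huv => measureReal_mono fun _ hω => huv.trans hω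

theorem ProbabilityTheory.IndepFun.integral_comp_eq_integral_integral {β γ : Type*}
    [MeasurableSpace β] [MeasurableSpace γ] {C : Ω → β} {Y : Ω → γ} (hCY : IndepFun C Y P)
    (hC : Measurable C) (hY : Measurable Y) {F : β × γ → ℝ} (hFm : StronglyMeasurable F)
    (hF : Integrable F ((P.map C).prod (P.map Y))) :
    ∫ ω, F (C ω, Y ω) ∂P = ∫ ω, (∫ ω', F (C ω', Y ω) ∂P) ∂P := by
  have hmap := (indepFun_iff_map_prod_eq_prod_map_map hC.aemeasurable hY.aemeasurable).mp hCY
  rw [← integral_map (hC.prodMk hY).aemeasurable hFm.aestronglyMeasurable, hmap,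
    integral_prod_symm F hF, integral_map hY.aemeasurable
      (hFm.integral_prod_left' ..).aestronglyMeasurable]
  refine integral_congr_ae (ae_of_all _ fun ω => ?_)
  exact integral_map hC.aemeasurable
    (hFm.comp_measurable (measurable_id.prodMk measurable_const)).aestronglyMeasurable

/-- `ipcw`: inverse probability of censoring weighting. -/
theorem integral_sq_one_sub_ipcw_sub {C : Ω → ℝ} (hC : Measurable C) {h : ℝ → ℝ} {t s : ℝ}
    (hhs : h s = P.real {ω | s ≤ C ω}) (hs : s ≤ t → h s ≠ 0) (p : ℝ) :
    ∫ ω, (1 - (if s ≤ C ω then (1 : ℝ) else 0) * (if s ≤ t then (1 : ℝ) else 0) / h s - p) ^ 2 ∂P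
      = ((if t < s then (1 : ℝ) else 0) - p) ^ 2
        + (if s ≤ t then (1 : ℝ) else 0) * (1 - h s) / h s := by
  have hite : ∀ ω, (1 - (if s ≤ C ω then (1 : ℝ) else 0) * (if s ≤ t then (1 : ℝ) else 0) / h s
      - p) ^ 2 = if s ≤ C ω then (1 - (if s ≤ t then (1 : ℝ) else 0) / h s - p) ^ 2
        else (1 - p) ^ 2 := fun ω => by split_ifs <;> simp
  simp_rw [hite]
  rw [integral_ite_const (measurableSet_le measurable_const hC), ← hhs]
  by_cases hst : s ≤ t
  · have hs0 := hs hst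
    simp only [hst, if_true, not_lt.mpr hst, if_false]
    field_simp
    ring
  · simp only [hst, if_false, not_le.mp hst, if_true]
    ring

end

/-- Proposition 3 of the paper: with `W = 1{T* ≤ C} · 1{T* ≤ t} / h(T*)`, for every bounded
measurable survival model `π`, `E[(1 − W − π(X))²] = E[(1{T* > t} − π(X))²] + B(t)` where
`B(t) = E[ 1{T* ≤ t} · (1 − h(T*)) / h(T*) ] ≥ 0` does not depend on `π`. -/
theorem stmt_6 {Ω : Type*} [mΩ : MeasurableSpace Ω] (P : Measure Ω) [IsProbabilityMeasure P]
    {E : Type*} [mE : MeasurableSpace E]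
    (T : Ω → ℝ) (X : Ω → E) (C : Ω → ℝ)
    (hT : Measurable T) (hX : Measurable X) (hC : Measurable C)
    (hTXC : ProbabilityTheory.IndepFun C (fun ω => (T ω, X ω)) P)
    (t : ℝ) (h : ℝ → ℝ) (hh : ∀ u, h u = (P {ω | u ≤ C ω}).toReal)
    (c : ℝ) (hc : 0 < c) (hcbd : ∀ u ≤ t, c ≤ h u)
    (W : Ω → ℝ)
    (hW : ∀ ω, W ω = (if T ω ≤ C ω then (1 : ℝ) else 0) * (if T ω ≤ t then (1 : ℝ) else 0)
      / h (T ω))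
    (π : E → ℝ) (hπ : Measurable π) (Cπ : ℝ) (hπbd : ∀ x, |π x| ≤ Cπ) :
    (∫ ω, (1 - W ω - π (X ω)) ^ 2 ∂P)
      = (∫ ω, ((if t < T ω then (1 : ℝ) else 0) - π (X ω)) ^ 2 ∂P)
        + ∫ ω, (if T ω ≤ t then (1 : ℝ) else 0) * (1 - h (T ω)) / h (T ω) ∂P ∧
    0 ≤ ∫ ω, (if T ω ≤ t then (1 : ℝ) else 0) * (1 - h (T ω)) / h (T ω) ∂P := by
  have hh' : ∀ u, h u = P.real {ω | u ≤ C ω} := hh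
  have hmeas : Measurable h := funext hh' ▸ (antitone_measureReal_le C).measurable
  have hne : ∀ u ≤ t, h u ≠ 0 := fun u hu => (hc.trans_le (hcbd u hu)).ne'
  have hbias : ∀ s, (if s ≤ t then (1 : ℝ) else 0) * (1 - h s) / h s ∈ Set.Icc 0 (1 / c) :=
    fun s => ite_mul_div_mem_Icc hc hcbd
      ⟨sub_nonneg.2 (hh' s ▸ measureReal_le_one), sub_le_self _ (hh' s ▸ measureReal_nonneg)⟩ s
  set F : ℝ × ℝ × E → ℝ := fun q => (1 - (if q.2.1 ≤ q.1 then (1 : ℝ) else 0) *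
    (if q.2.1 ≤ t then (1 : ℝ) else 0) / h q.2.1 - π q.2.2) ^ 2
  have hF : Integrable F ((P.map C).prod (P.map fun ω => (T ω, X ω))) := by
    refine integrable_sq_of_abs_le (M := 1 + 1 / c + Cπ)
      (by fun_prop : Measurable _).aestronglyMeasurable fun q => ?_
    have hw := ite_mul_div_mem_Icc hc hcbd (a := if q.2.1 ≤ q.1 then (1 : ℝ) else 0)
      (by split_ifs <;> simp) q.2.1
    have hp := abs_le.mp (hπbd q.2.2)
    rw [mul_comm, abs_le]
    constructor <;> linarith [hw.1, hw.2]
  have hcond := hTXC.integral_comp_eq_integral_integral hC (hT.prodMk hX)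
    (by fun_prop : Measurable F).stronglyMeasurable hF
  simp only [F, integral_sq_one_sub_ipcw_sub hC (hh' _) (hne _)] at hcond
  have hbrier : Integrable (fun ω => ((if t < T ω then (1 : ℝ) else 0) - π (X ω)) ^ 2) P :=
    integrable_sq_of_abs_le (M := 1 + Cπ) (by fun_prop : Measurable _).aestronglyMeasurable
      fun ω => by
        have hp := abs_le.mp (hπbd (X ω))
        rw [abs_le]
        split_ifs <;> constructor <;> linarith
  have hB : Integrable (fun ω => (if T ω ≤ t then (1 : ℝ) else 0) * (1 - h (T ω)) / h (T ω)) P :=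
    .of_bound (by fun_prop : Measurable _).aestronglyMeasurable (1 / c) (ae_of_all _ fun ω => by
      rw [Real.norm_eq_abs, abs_of_nonneg (hbias (T ω)).1]
      exact (hbias (T ω)).2)
  simp only [hW]
  exact ⟨hcond.trans (integral_add hbrier hB), integral_nonneg fun ω => (hbias (T ω)).1⟩
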